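/- Let H be an infinite-dimensional real Hilbert space equipped with bounded operators Rᵢ, Rⱼ : H →L[ℝ] H satisfying Rᵢ ∘ Rᵢ = −1, Rⱼ ∘ Rⱼ = −1, Rᵢ ∘ Rⱼ = −(Rⱼ ∘ Rᵢ), Rᵢ† = −Rᵢ, and Rⱼ† = −Rⱼ (so that H is a quaternionic Hilbert space viewed as a real Hilbert space). Let T : H →L[ℝ] H be a bounded operator commuting with Rᵢ and with Rⱼ. Then there exist n ∈ ℕ, real scalars c : Fin n → ℝ, and orthogonal operators U : Fin n → (H →L[ℝ] H), each commuting with Rᵢ and with Rⱼ, such that T = ∑ i, c i • U i. -/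

import Mathlib

/-!
Split `T = a + b` into its self-adjoint and skew-adjoint parts; both commute with `Rᵢ, Rⱼ`
because these are skew-adjoint. After rescaling, `‖a‖, ‖b‖ < 1`, and the square roots
`s = √(1 - a²)`, `s' = √(1 + b²)` are given by the binomial series, whose coefficients are
Catalan numbers, so they commute with everything that commutes with `a`, resp. `b`. Then
`v = s' + b` is orthogonal with `b = (v - v†)/2`, and `u = a + J s` is orthogonal with
`a = (u + u†)/2` as soon as `J` is a complex structure (`J² = -1`, `J† = -J`) commuting with
`Rᵢ, Rⱼ, a`.

Such a `J` is `Rᵢ (2P - 1)`, where `P` is the orthogonal projection onto a closed subspace `M`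
invariant under `Rᵢ` and `a` with `Rⱼ M = M⊥`. Take `M` maximal (Zorn) among the invariant
subspaces isotropic for the skew form `⟪x, Rⱼ y⟫`. The real algebra generated by the commuting
operators `Rᵢ` and `a` consists of operators symmetric for this form, so the cyclic subspace
of a vector orthogonal to `M + Rⱼ M` is isotropic and orthogonal to `M` for the form; by
maximality no such nonzero vector exists.
-/

theorem catalan_le_four_pow (n : ℕ) : catalan n ≤ 4 ^ n :=
  calc catalan n ≤ (n + 1) * catalan n := Nat.le_mul_of_pos_left _ n.succ_pos
    _ = n.centralBinom := succ_mul_catalan_eq_centralBinom n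
    _ ≤ 4 ^ n := Nat.centralBinom_le_four_pow n

section CatalanSqrt

open Finset

variable {R : Type*} [NormedRing R]

noncomputable def catalanSum (y : R) : R := ∑' n, catalan n • y ^ n

theorem Commute.catalanSum_right {a y : R} (h : Commute a y) : Commute a (catalanSum y) :=
  .tsum_right a fun n ↦ (h.pow_right n).smul_right _

theorem IsSelfAdjoint.catalanSum [StarRing R] [ContinuousStar R] {y : R} (h : IsSelfAdjoint y) :
    IsSelfAdjoint (catalanSum y) := by
  simp only [IsSelfAdjoint, _root_.catalanSum, tsum_star, star_nsmul, star_pow, h.star_eq]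

variable [NormedAlgebra ℝ R]

theorem summable_norm_catalan_nsmul_pow {y : R} (hy : ‖y‖ < 4⁻¹) :
    Summable fun n ↦ ‖catalan n • y ^ n‖ := by
  have h4y : ‖(4 : ℝ) • y‖ < 1 := by
    rw [norm_smul, Real.norm_ofNat]; linarith
  refine (summable_norm_geometric_of_norm_lt_one h4y).of_nonneg_of_le (fun _ ↦ norm_nonneg _)
    fun n ↦ ?_
  calc ‖catalan n • y ^ n‖ ≤ catalan n * ‖y ^ n‖ := norm_nsmul_le
    _ ≤ 4 ^ n * ‖y ^ n‖ := by gcongr; exact_mod_cast catalan_le_four_pow n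
    _ = ‖((4 : ℝ) • y) ^ n‖ := by rw [smul_pow, norm_smul, Real.norm_of_nonneg (by positivity)]

-- `√(1 - 4y) = 1 - 2y C(y)` for the Catalan generating function `C`; meaningful for `‖x‖ < 1`.
noncomputable def sqrtOneSub (x : R) : R :=
  1 - 2 * ((4⁻¹ : ℝ) • x * catalanSum ((4⁻¹ : ℝ) • x))

theorem Commute.sqrtOneSub_right {a x : R} (h : Commute a x) : Commute a (sqrtOneSub x) :=
  .sub_right (.one_right a) <| .mul_right (.ofNat_right a 2) <|
    (h.smul_right _).mul_right (h.smul_right _).catalanSum_right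

theorem IsSelfAdjoint.sqrtOneSub [StarRing R] [ContinuousStar R] [StarModule ℝ R] {x : R}
    (h : IsSelfAdjoint x) : IsSelfAdjoint (sqrtOneSub x) := by
  have hy : IsSelfAdjoint ((4⁻¹ : ℝ) • x) := (IsSelfAdjoint.all _).smul h
  have hyC := (hy.commute_iff hy.catalanSum).mp (Commute.refl _).catalanSum_right
  exact .sub (.one R) (((IsSelfAdjoint.ofNat 2).commute_iff hyC).mp (.ofNat_left 2 _))

variable [CompleteSpace R]

theorem catalanSum_eq_one_add {y : R} (hy : ‖y‖ < 4⁻¹) :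
    catalanSum y = 1 + y * catalanSum y ^ 2 := by
  have hs := summable_norm_catalan_nsmul_pow hy
  have hterm : ∀ n, ∑ kl ∈ antidiagonal n, catalan kl.1 • y ^ kl.1 * catalan kl.2 • y ^ kl.2
      = catalan (n + 1) • y ^ n := fun n ↦ by
    rw [catalan_succ', sum_smul]
    refine sum_congr rfl fun kl hkl ↦ ?_
    rw [smul_mul_smul_comm, ← pow_add, mem_antidiagonal.mp hkl]
  have hsq : catalanSum y ^ 2 = ∑' n, catalan (n + 1) • y ^ n := by
    rw [sq, catalanSum, tsum_mul_tsum_eq_tsum_sum_antidiagonal_of_summable_norm hs hs]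
    exact tsum_congr hterm
  have hsucc : Summable fun n ↦ catalan (n + 1) • y ^ n :=
    (summable_norm_sum_mul_antidiagonal_of_summable_norm hs hs).of_norm.congr hterm
  rw [hsq, ← hsucc.tsum_mul_left, catalanSum, hs.of_norm.tsum_eq_zero_add, catalan_zero, one_smul,
    pow_zero]
  exact congrArg _ (tsum_congr fun n ↦ by rw [pow_succ', mul_smul_comm])

theorem sqrtOneSub_mul_self {x : R} (hx : ‖x‖ < 1) : sqrtOneSub x * sqrtOneSub x = 1 - x := by
  set y : R := (4⁻¹ : ℝ) • x
  set C := catalanSum y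
  have hy : ‖y‖ < 4⁻¹ := by rw [norm_smul, Real.norm_of_nonneg (by norm_num)]; linarith
  have hyC : Commute y C := (Commute.refl y).catalanSum_right
  have hC : C - y * C ^ 2 = 1 := by
    rw [sub_eq_iff_eq_add', add_comm]; exact catalanSum_eq_one_add hy
  have hx : 4 * y = x := by
    rw [← Nat.cast_ofNat, ← nsmul_eq_mul, ← Nat.cast_smul_eq_nsmul ℝ, smul_smul]; norm_num
  have hS : sqrtOneSub x = 1 - 2 * (y * C) := rfl
  calc sqrtOneSub x * sqrtOneSub x = 1 - 4 * (y * C) + 4 * (y * (C * y) * C) := by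
        rw [hS]; noncomm_ring
    _ = 1 - 4 * (y * (C - y * C ^ 2)) := by rw [← hyC.eq]; noncomm_ring
    _ = 1 - x := by rw [hC, mul_one, hx]

end CatalanSqrt

theorem Commute.star_left_of_star_eq_neg {R : Type*} [Ring R] [StarRing R] {a r : R}
    (h : Commute a r) (hr : star r = -r) : Commute (star a) r := by
  simpa [hr] using h.star_star

theorem exists_pos_norm_inv_smul_lt_one {E : Type*} [SeminormedAddCommGroup E] [NormedSpace ℝ E]
    (x : E) : ∃ t : ℝ, 0 < t ∧ ‖t⁻¹ • x‖ < 1 := by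
  refine ⟨‖x‖ + 1, by positivity, ?_⟩
  rw [norm_smul, norm_inv, Real.norm_of_nonneg (by positivity), inv_mul_lt_one₀ (by positivity)]
  linarith

theorem norm_mul_self_lt_one {R : Type*} [NormedRing R] {a : R} (ha : ‖a‖ < 1) : ‖a * a‖ < 1 :=
  (norm_mul_le a a).trans_lt (mul_lt_one_of_nonneg_of_lt_one_left (norm_nonneg a) ha ha.le)

section Unitary

variable {R : Type*} [NormedRing R] [NormedAlgebra ℝ R] [CompleteSpace R] [StarRing R]
  [ContinuousStar R] [StarModule ℝ R]

theorem IsSelfAdjoint.exists_unitary_add_star_eq_two_smul {a j : R} (ha : IsSelfAdjoint a)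
    (hna : ‖a‖ < 1) (hj : j * j = -1) (hjs : star j = -j) (hja : Commute j a) :
    ∃ u ∈ unitary R, u + star u = (2 : ℝ) • a ∧ ∀ r, Commute a r → Commute j r → Commute u r := by
  set s := _root_.sqrtOneSub (a * a)
  have hs : s * s = 1 - a * a := sqrtOneSub_mul_self (norm_mul_self_lt_one hna)
  have hss : IsSelfAdjoint s := ((ha.commute_iff ha).mp (.refl a)).sqrtOneSub
  have hjs' : Commute j s := (hja.mul_right hja).sqrtOneSub_right
  have has : Commute a (j * s) :=
    hja.symm.mul_right ((Commute.refl a).mul_right (.refl a)).sqrtOneSub_right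
  have hstar : star (a + j * s) = a - j * s := by
    rw [star_add, star_mul, ha.star_eq, hss.star_eq, hjs, mul_neg, ← hjs'.eq, sub_eq_add_neg]
  have hsq : (j * s) * (j * s) = -(1 - a * a) := by
    rw [← hs, hjs'.symm.mul_mul_mul_comm, hj, neg_one_mul]
  have hone : a * a - (j * s) * (j * s) = 1 := by rw [hsq]; abel
  refine ⟨a + j * s, Unitary.mem_iff.mpr ⟨?_, ?_⟩, ?_, fun r har hjr ↦ ?_⟩
  · rw [hstar, ← has.mul_self_sub_mul_self_eq', hone]
  · rw [hstar, ← has.mul_self_sub_mul_self_eq, hone]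
  · rw [hstar, two_smul]; abel
  · exact har.add_left (hjr.mul_left (har.mul_left har).symm.sqrtOneSub_right.symm)

theorem exists_unitary_sub_star_eq_two_smul {b : R} (hb : star b = -b) (hnb : ‖b‖ < 1) :
    ∃ v ∈ unitary R, v - star v = (2 : ℝ) • b ∧ ∀ r, Commute b r → Commute v r := by
  set s := sqrtOneSub (-(b * b))
  have hs : s * s = 1 + b * b := by
    rw [sqrtOneSub_mul_self (by rw [norm_neg]; exact norm_mul_self_lt_one hnb), sub_neg_eq_add]
  have hss : IsSelfAdjoint s := by
    refine IsSelfAdjoint.sqrtOneSub ?_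
    rw [IsSelfAdjoint, star_neg, star_mul, hb, neg_mul_neg]
  have hsb : Commute s b := ((Commute.refl b).mul_right (.refl b)).neg_right.sqrtOneSub_right.symm
  have hstar : star (s + b) = s - b := by rw [star_add, hss.star_eq, hb, sub_eq_add_neg]
  have hone : s * s - b * b = 1 := by rw [hs, add_sub_cancel_right]
  refine ⟨s + b, Unitary.mem_iff.mpr ⟨?_, ?_⟩, ?_, fun r hbr ↦ ?_⟩
  · rw [hstar, ← hsb.mul_self_sub_mul_self_eq', hone]
  · rw [hstar, ← hsb.mul_self_sub_mul_self_eq, hone]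
  · rw [hstar, two_smul]; abel
  · exact .add_left ((hbr.mul_left hbr).neg_left.symm.sqrtOneSub_right.symm) hbr

theorem IsSelfAdjoint.exists_eq_smul_unitary_add_star {a j : R} (ha : IsSelfAdjoint a)
    (hj : j * j = -1) (hjs : star j = -j) (hja : Commute j a) :
    ∃ (c : ℝ) (u : R), u ∈ unitary R ∧ a = c • (u + star u) ∧
      ∀ r, Commute a r → Commute j r → Commute u r := by
  obtain ⟨t, ht, hta⟩ := exists_pos_norm_inv_smul_lt_one a
  obtain ⟨u, hu, hsum, hcomm⟩ :=
    ((IsSelfAdjoint.all t⁻¹).smul ha).exists_unitary_add_star_eq_two_smul hta hj hjs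
      (hja.smul_right _)
  refine ⟨t / 2, u, hu, ?_, fun r har hjr ↦ hcomm r (har.smul_left _) hjr⟩
  rw [hsum, smul_smul, smul_smul, div_mul_cancel₀ _ two_ne_zero, mul_inv_cancel₀ ht.ne', one_smul]

theorem exists_eq_smul_unitary_sub_star {b : R} (hb : star b = -b) :
    ∃ (c : ℝ) (v : R), v ∈ unitary R ∧ b = c • (v - star v) ∧ ∀ r, Commute b r → Commute v r := by
  obtain ⟨t, ht, htb⟩ := exists_pos_norm_inv_smul_lt_one b
  obtain ⟨v, hv, hdiff, hcomm⟩ :=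
    exists_unitary_sub_star_eq_two_smul (by rw [star_smul, star_trivial, hb, smul_neg]) htb
  refine ⟨t / 2, v, hv, ?_, fun r hbr ↦ hcomm r (hbr.smul_left _)⟩
  rw [hdiff, smul_smul, smul_smul, div_mul_cancel₀ _ two_ne_zero, mul_inv_cancel₀ ht.ne', one_smul]

end Unitary

open Set Submodule ContinuousLinearMap
open scoped RealInnerProductSpace

theorem star_mul_eq_mul_of_mem_adjoin {A : Type*} [Ring A] [StarRing A] [Algebra ℝ A]
    [StarModule ℝ A] {s : Set A} {r : A} (hcomm : ∀ a ∈ s, ∀ b ∈ s, Commute a b)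
    (hs : ∀ a ∈ s, star a * r = r * a) {b : A} (hb : b ∈ Algebra.adjoin ℝ s) :
    star b * r = r * b := by
  induction hb using Algebra.adjoin_induction with
  | mem x hx => exact hs x hx
  | algebraMap c => rw [← algebraMap_star_comm, star_trivial, Algebra.commutes]
  | add x y _ _ hx hy => rw [star_add, add_mul, mul_add, hx, hy]
  | mul x y hx' hy' hx hy =>
    have hxy : Commute x y := Algebra.commute_of_mem_adjoin_of_forall_mem_commute hy' fun c hc ↦
      (Algebra.commute_of_mem_adjoin_of_forall_mem_commute hx' fun d hd ↦ hcomm c hc d hd).symm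
    rw [star_mul, mul_assoc, hx, ← mul_assoc, hy, mul_assoc, hxy.eq]

theorem IsStarProjection.exists_complex_structure {A : Type*} [Ring A] [StarRing A] {p i j : A}
    (hp : IsStarProjection p) (hi : i * i = -1) (his : star i = -i) (hpi : Commute p i)
    (hpj : p * j = j * (1 - p)) (hij : i * j = -(j * i)) :
    ∃ J : A, J * J = -1 ∧ star J = -J ∧ Commute J i ∧ Commute J j ∧
      ∀ a, Commute p a → Commute i a → Commute J a := by
  set k := 2 * p - 1 with hk_def
  have hk : k * k = 1 := by
    calc k * k = 4 * (p * p) - 4 * p + 1 := by rw [hk_def]; noncomm_ring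
      _ = 1 := by rw [hp.isIdempotentElem.eq, sub_self, zero_add]
  have hks : star k = k :=
    (((IsSelfAdjoint.ofNat 2).commute_iff hp.isSelfAdjoint).mp (.ofNat_left 2 p)).sub (.one A)
  have hka : ∀ a, Commute p a → Commute k a := fun a hpa ↦
    ((Commute.ofNat_left 2 a).mul_left hpa).sub_left (.one_left a)
  have hki : Commute k i := hka i hpi
  have hkj : k * j = -(j * k) := by
    calc k * j = 2 * (p * j) - j := by rw [hk_def]; noncomm_ring
      _ = -(j * k) := by rw [hpj, hk_def]; noncomm_ring
  refine ⟨i * k, ?_, ?_, (Commute.refl i).mul_left hki, ?_,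
    fun a hpa hia ↦ hia.mul_left (hka a hpa)⟩
  · rw [hki.mul_mul_mul_comm, hi, hk, mul_one]
  · rw [star_mul, hks, his, mul_neg, hki.eq]
  · calc i * k * j = -(i * j) * k := by rw [mul_assoc, hkj]; noncomm_ring
      _ = j * (i * k) := by rw [hij, neg_neg, mul_assoc]

section Isotropic

variable {H : Type*} [NormedAddCommGroup H] [InnerProductSpace ℝ H]

theorem Submodule.starProjection_mul_eq_mul_starProjection {U V : Submodule ℝ H}
    [U.HasOrthogonalProjection] [V.HasOrthogonalProjection] {T : H →L[ℝ] H}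
    (hU : MapsTo T U V) (hUo : MapsTo T Uᗮ Vᗮ) :
    V.starProjection * T = T * U.starProjection := by
  ext x
  rw [mul_apply_eq_comp, mul_apply_eq_comp]
  exact eq_starProjection_of_mem_orthogonal' (hU (U.starProjection_apply_mem x))
    (hUo (sub_starProjection_mem_orthogonal x)) (by rw [← map_add, add_sub_cancel])

-- `MapsTo R M Mᗮ`: `M` is isotropic for the bilinear form `⟪x, R y⟫`.
def IsInvariantIsotropic (𝔅 : Subalgebra ℝ (H →L[ℝ] H)) (R : H →L[ℝ] H) (M : Submodule ℝ H) :
    Prop :=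
  (∀ B ∈ 𝔅, MapsTo B M M) ∧ MapsTo R M Mᗮ

variable {𝔅 : Subalgebra ℝ (H →L[ℝ] H)} {R : H →L[ℝ] H}

theorem isInvariantIsotropic_sSup {c : Set (Submodule ℝ H)}
    (hc : ∀ M ∈ c, IsInvariantIsotropic 𝔅 R M) (hchain : IsChain (· ≤ ·) c) (hne : c.Nonempty) :
    IsInvariantIsotropic 𝔅 R (sSup c) := by
  have hmem : ∀ x ∈ sSup c, ∃ M ∈ c, x ∈ M := fun x hx ↦
    (mem_sSup_of_directed hne hchain.directedOn).mp hx
  refine ⟨fun B hB x hx ↦ ?_, fun x hx ↦ (mem_orthogonal _ _).mpr fun y hy ↦ ?_⟩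
  · obtain ⟨M, hM, hxM⟩ := hmem x hx
    exact le_sSup hM ((hc M hM).1 B hB hxM)
  · obtain ⟨M, hM, hxM⟩ := hmem x hx
    obtain ⟨N, hN, hyN⟩ := hmem y hy
    rcases hchain.total hM hN with hMN | hNM
    · exact inner_right_of_mem_orthogonal hyN ((hc N hN).2 (hMN hxM))
    · exact inner_right_of_mem_orthogonal (hNM hyN) ((hc M hM).2 hxM)

theorem IsInvariantIsotropic.topologicalClosure {M : Submodule ℝ H}
    (h : IsInvariantIsotropic 𝔅 R M) : IsInvariantIsotropic 𝔅 R M.topologicalClosure := by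
  refine ⟨fun B hB ↦ topologicalClosure_mem_invtSubmodule (h.1 B hB), ?_⟩
  rw [orthogonal_closure]
  exact h.2.closure_left R.continuous M.isClosed_orthogonal

variable [CompleteSpace H]

theorem Submodule.mapsTo_orthogonal_of_mapsTo_star {T : H →L[ℝ] H} {U : Submodule ℝ H}
    (h : MapsTo ⇑(star T) U U) : MapsTo T Uᗮ Uᗮ :=
  orthogonal_mem_invtSubmodule h

theorem inner_apply_apply_eq_of_star_mul_eq {B R : H →L[ℝ] H} (hB : star B * R = R * B)
    (x y : H) : ⟪B x, R y⟫ = ⟪x, R (B y)⟫ := by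
  rw [← adjoint_inner_right, ← star_eq_adjoint, ← mul_apply_eq_comp, hB, mul_apply_eq_comp]

theorem inner_apply_self_eq_zero_of_star_eq_neg {S : H →L[ℝ] H} (hS : star S = -S) (x : H) :
    ⟪x, S x⟫ = 0 := by
  have h : ⟪x, S x⟫ = -⟪x, S x⟫ :=
    calc ⟪x, S x⟫ = ⟪star S x, x⟫ := by rw [star_eq_adjoint, adjoint_inner_left]
      _ = -⟪x, S x⟫ := by rw [hS, neg_apply, inner_neg_left, real_inner_comm]
  linarith

theorem IsInvariantIsotropic.exists_sup {M : Submodule ℝ H} (hM : IsInvariantIsotropic 𝔅 R M)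
    (h𝔅 : ∀ B ∈ 𝔅, star B * R = R * B) (hR : star R = -R) {v : H} (hRv : R v ∈ Mᗮ) :
    ∃ Z : Submodule ℝ H, v ∈ Z ∧ IsInvariantIsotropic 𝔅 R (M ⊔ Z) := by
  set Z := (Subalgebra.toSubmodule 𝔅).map (apply ℝ H v).toLinearMap
  refine ⟨Z, ⟨1, one_mem 𝔅, rfl⟩, ?_⟩
  have hZ : ∀ z ∈ Z, ∃ C ∈ 𝔅, C v = z := by
    rintro z ⟨C, hC, rfl⟩
    exact ⟨C, hC, rfl⟩
  refine ⟨fun B hB ↦ Module.End.invtSubmodule.sup_mem (hM.1 B hB) fun z hz ↦ ?_, ?_⟩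
  · obtain ⟨C, hC, rfl⟩ := hZ z hz
    exact ⟨B * C, (mul_mem hB hC : B * C ∈ 𝔅), rfl⟩
  show M ⊔ Z ≤ (M ⊔ Z)ᗮ.comap (R : H →ₗ[ℝ] H)
  rw [← inf_orthogonal, comap_inf]
  refine sup_le (le_inf hM.2 fun m hm ↦ ?_) (le_inf (fun z hz ↦ ?_) fun z hz ↦ ?_)
  · rw [mem_comap, coe_coe]
    refine (mem_orthogonal _ _).mpr fun z hz ↦ ?_
    obtain ⟨C, hC, rfl⟩ := hZ z hz
    rw [inner_apply_apply_eq_of_star_mul_eq (h𝔅 C hC), ← adjoint_inner_left, ← star_eq_adjoint, hR,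
      neg_apply, inner_neg_left, inner_left_of_mem_orthogonal (hM.1 C hC hm) hRv, neg_zero]
  · obtain ⟨C, hC, rfl⟩ := hZ z hz
    rw [mem_comap, coe_coe]
    refine (mem_orthogonal _ _).mpr fun m hm ↦ ?_
    rw [← inner_apply_apply_eq_of_star_mul_eq (h𝔅 C hC)]
    exact inner_right_of_mem_orthogonal (hM.1 C hC hm) hRv
  · obtain ⟨C, hC, rfl⟩ := hZ z hz
    rw [mem_comap, coe_coe]
    refine (mem_orthogonal _ _).mpr fun z' hz' ↦ ?_
    obtain ⟨C', hC', rfl⟩ := hZ z' hz'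
    have hS : star (R * (C' * C)) = -(R * (C' * C)) := by
      rw [star_mul, hR, mul_neg, h𝔅 _ (mul_mem hC' hC)]
    rw [inner_apply_apply_eq_of_star_mul_eq (h𝔅 C' hC')]
    simpa using inner_apply_self_eq_zero_of_star_eq_neg hS v

theorem exists_invariant_submodule_swapped (hR : star R = -R) (hRR : R * R = -1)
    (h𝔅 : ∀ B ∈ 𝔅, star B * R = R * B) :
    ∃ M : Submodule ℝ H, IsClosed (M : Set H) ∧ (∀ B ∈ 𝔅, MapsTo B M M) ∧ MapsTo R M Mᗮ ∧
      MapsTo R Mᗮ M := by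
  have hbot (T : H →L[ℝ] H) (N : Submodule ℝ H) : MapsTo T (⊥ : Submodule ℝ H) N := fun x hx ↦ by
    rw [(mem_bot ℝ).mp hx, map_zero]; exact zero_mem N
  obtain ⟨M, -, hmax⟩ := zorn_le_nonempty₀ {M | IsInvariantIsotropic 𝔅 R M}
    (fun c hc hchain y hy ↦ ⟨sSup c, isInvariantIsotropic_sSup hc hchain ⟨y, hy⟩,
      fun _ ↦ le_sSup⟩) ⊥ ⟨fun B _ ↦ hbot B ⊥, hbot R _⟩
  have hM : IsInvariantIsotropic 𝔅 R M := hmax.prop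
  have hclosed : IsClosed (M : Set H) := by
    rw [← hmax.eq_of_ge hM.topologicalClosure M.le_topologicalClosure]
    exact M.isClosed_topologicalClosure
  have : CompleteSpace M := hclosed.completeSpace_coe
  have hnull : ∀ v ∈ Mᗮ, R v ∈ Mᗮ → v = 0 := fun v hv hRv ↦ by
    obtain ⟨Z, hvZ, hMZ⟩ := hM.exists_sup h𝔅 hR hRv
    have hvM : v ∈ M := hmax.eq_of_ge hMZ le_sup_left ▸ mem_sup_right hvZ
    exact inner_self_eq_zero.mp (inner_left_of_mem_orthogonal hvM hv)
  refine ⟨M, hclosed, hM.1, hM.2, fun f hf ↦ ?_⟩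
  -- the `Mᗮ`-component of `R f` lies in `Mᗮ` and is mapped into `Mᗮ` by `R`, so it vanishes
  have hRw : R (R f - M.starProjection (R f)) ∈ Mᗮ := by
    rw [map_sub, ← mul_apply_eq_comp, hRR, neg_apply, one_apply_eq_self]
    exact sub_mem (neg_mem hf) (hM.2 (M.starProjection_apply_mem _))
  rw [sub_eq_zero.mp (hnull _ (sub_starProjection_mem_orthogonal _) hRw)]
  exact M.starProjection_apply_mem _

end Isotropic

theorem exists_complex_structure_commute {H : Type*} [NormedAddCommGroup H]
    [InnerProductSpace ℝ H] [CompleteSpace H] {Ri Rj A : H →L[ℝ] H} (hRi : Ri * Ri = -1)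
    (hRiS : star Ri = -Ri) (hRj : Rj * Rj = -1) (hRjS : star Rj = -Rj)
    (hRiRj : Ri * Rj = -(Rj * Ri)) (hA : IsSelfAdjoint A) (hARi : Commute A Ri)
    (hARj : Commute A Rj) :
    ∃ J : H →L[ℝ] H, J * J = -1 ∧ star J = -J ∧ Commute J Ri ∧ Commute J Rj ∧ Commute J A := by
  set 𝔅 := Algebra.adjoin ℝ {Ri, A}
  have hRi𝔅 : Ri ∈ 𝔅 := Algebra.subset_adjoin (by simp)
  have hA𝔅 : A ∈ 𝔅 := Algebra.subset_adjoin (by simp)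
  have h𝔅 : ∀ B ∈ 𝔅, star B * Rj = Rj * B := by
    refine fun B hB ↦ star_mul_eq_mul_of_mem_adjoin ?_ ?_ hB
    · simp only [mem_insert_iff, mem_singleton_iff, forall_eq_or_imp, forall_eq]
      exact ⟨⟨.refl Ri, hARi.symm⟩, hARi, .refl A⟩
    · simp only [mem_insert_iff, mem_singleton_iff, forall_eq_or_imp, forall_eq]
      exact ⟨by rw [hRiS, neg_mul, hRiRj, neg_neg], by rw [hA.star_eq, hARj.eq]⟩
  obtain ⟨M, hMc, hM𝔅, hMRj, hMoRj⟩ := exists_invariant_submodule_swapped hRjS hRj h𝔅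
  have : CompleteSpace M := hMc.completeSpace_coe
  have hP : ∀ B ∈ 𝔅, star B ∈ 𝔅 → Commute M.starProjection B := fun B hB hB' ↦
    starProjection_mul_eq_mul_starProjection (hM𝔅 B hB)
      (mapsTo_orthogonal_of_mapsTo_star (hM𝔅 _ hB'))
  have hPRj : M.starProjection * Rj = Rj * (1 - M.starProjection) := by
    rw [← starProjection_orthogonal']
    refine starProjection_mul_eq_mul_starProjection hMoRj ?_
    rwa [orthogonal_orthogonal]
  obtain ⟨J, hJ, hJs, hJi, hJj, hJa⟩ := isStarProjection_starProjection.exists_complex_structure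
    hRi hRiS (hP Ri hRi𝔅 (by rw [hRiS]; exact neg_mem hRi𝔅)) hPRj hRiRj
  exact ⟨J, hJ, hJs, hJi, hJj, hJa A (hP A hA𝔅 (by rwa [hA.star_eq])) hARi.symm⟩

theorem quaternionic_bounded_op_linear_combination_of_orthogonals_general
    {H : Type*} [NormedAddCommGroup H] [InnerProductSpace ℝ H] [CompleteSpace H]
    (Ri Rj : H →L[ℝ] H)
    (hRi2 : Ri ∘L Ri = -1) (hRj2 : Rj ∘L Rj = -1)
    (hRiRj : Ri ∘L Rj = -(Rj ∘L Ri))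
    (hRiAdj : ContinuousLinearMap.adjoint Ri = -Ri)
    (hRjAdj : ContinuousLinearMap.adjoint Rj = -Rj)
    (T : H →L[ℝ] H)
    (hTRi : T ∘L Ri = Ri ∘L T) (hTRj : T ∘L Rj = Rj ∘L T) :
    ∃ (n : ℕ) (c : Fin n → ℝ) (U : Fin n → (H →L[ℝ] H)),
      (∀ i, U i ∈ unitary (H →L[ℝ] H) ∧
        U i ∘L Ri = Ri ∘L U i ∧ U i ∘L Rj = Rj ∘L U i) ∧
      T = ∑ i, c i • U i := by
  have hRiS : star Ri = -Ri := hRiAdj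
  have hRjS : star Rj = -Rj := hRjAdj
  have hparts : ∀ r, star r = -r → Commute T r →
      Commute (selfAdjointPart ℝ T : H →L[ℝ] H) r ∧ Commute (skewAdjointPart ℝ T : H →L[ℝ] H) r :=
    fun r hr hTr ↦ ⟨((hTr.add_left (hTr.star_left_of_star_eq_neg hr)).smul_left _),
      ((hTr.sub_left (hTr.star_left_of_star_eq_neg hr)).smul_left _)⟩
  obtain ⟨haRi, hbRi⟩ := hparts Ri hRiS hTRi
  obtain ⟨haRj, hbRj⟩ := hparts Rj hRjS hTRj
  obtain ⟨J, hJ, hJs, hJRi, hJRj, hJa⟩ := exists_complex_structure_commute hRi2 hRiS hRj2 hRjS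
    hRiRj (selfAdjointPart ℝ T).2 haRi haRj
  obtain ⟨c, u, hu, hau, hu_comm⟩ :=
    (selfAdjointPart ℝ T).2.exists_eq_smul_unitary_add_star hJ hJs hJa
  obtain ⟨d, v, hv, hbv, hv_comm⟩ :=
    exists_eq_smul_unitary_sub_star (skewAdjoint.mem_iff.mp (skewAdjointPart ℝ T).2)
  have hstar : ∀ w, w ∈ unitary (H →L[ℝ] H) ∧ Commute w Ri ∧ Commute w Rj →
      star w ∈ unitary (H →L[ℝ] H) ∧ Commute (star w) Ri ∧ Commute (star w) Rj :=
    fun w ⟨hw, hwRi, hwRj⟩ ↦ ⟨Unitary.star_mem hw, hwRi.star_left_of_star_eq_neg hRiS,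
      hwRj.star_left_of_star_eq_neg hRjS⟩
  have hu' : u ∈ unitary (H →L[ℝ] H) ∧ Commute u Ri ∧ Commute u Rj :=
    ⟨hu, hu_comm Ri haRi hJRi, hu_comm Rj haRj hJRj⟩
  have hv' : v ∈ unitary (H →L[ℝ] H) ∧ Commute v Ri ∧ Commute v Rj :=
    ⟨hv, hv_comm Ri hbRi, hv_comm Rj hbRj⟩
  refine ⟨4, ![c, c, d, -d], ![u, star u, v, star v], fun i ↦ ?_, ?_⟩
  · fin_cases i
    exacts [hu', hstar u hu', hv', hstar v hv']
  · conv_lhs => rw [← StarModule.selfAdjointPart_add_skewAdjointPart ℝ T, hau, hbv]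
    simp only [Fin.sum_univ_four, Matrix.cons_val]
    module

/-- on an infinite-dimensional quaternionic Hilbert space, viewed as a real
Hilbert space `H` with operators `Rᵢ, Rⱼ`, every bounded operator commuting with `Rᵢ` and
`Rⱼ` is a finite real linear combination of orthogonal operators commuting with `Rᵢ` and
`Rⱼ`. -/
theorem quaternionic_bounded_op_linear_combination_of_orthogonals
    {H : Type*} [NormedAddCommGroup H] [InnerProductSpace ℝ H] [CompleteSpace H]
    (hH : ¬ FiniteDimensional ℝ H)
    (Ri Rj : H →L[ℝ] H)
    (hRi2 : Ri ∘L Ri = -1) (hRj2 : Rj ∘L Rj = -1)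
    (hRiRj : Ri ∘L Rj = -(Rj ∘L Ri))
    (hRiAdj : ContinuousLinearMap.adjoint Ri = -Ri)
    (hRjAdj : ContinuousLinearMap.adjoint Rj = -Rj)
    (T : H →L[ℝ] H)
    (hTRi : T ∘L Ri = Ri ∘L T) (hTRj : T ∘L Rj = Rj ∘L T) :
    ∃ (n : ℕ) (c : Fin n → ℝ) (U : Fin n → (H →L[ℝ] H)),
      (∀ i, U i ∈ unitary (H →L[ℝ] H) ∧
        U i ∘L Ri = Ri ∘L U i ∧ U i ∘L Rj = Rj ∘L U i) ∧
      T = ∑ i, c i • U i :=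
  quaternionic_bounded_op_linear_combination_of_orthogonals_general Ri Rj hRi2 hRj2 hRiRj hRiAdj
    hRjAdj T hTRi hTRj
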